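/- Let A, E ∈ ℝ^{d×d} and let Q = [q₁, Q₂] ∈ ℝ^{d×d} be orthogonal with first column q₁. Write Qᵀ A Q in block form with (1,1)-entry λ, first row off-diagonal block vᵀ, zero (2,1)-block, and (2,2)-block T₂₂; write Qᵀ E Q in block form with (1,1)-entry ε, blocks rᵀ, δ, E₂₂. If σ = σ_min(T₂₂ − λI) > 0 and ‖E‖₂(1 + 5‖v‖₂/σ) ≤ σ/5, then there exists u ∈ ℝ^{d−1} with ‖u‖₂ ≤ 4‖δ‖₂/σ such that q̃₁ = (q₁ + Q₂ u)/√(1 + uᵀu) is a unit 2-norm eigenvector of A + E. -/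

import Mathlib

/-!
In the basis `Q`, the vector `(1, u)` is an eigenvector of `Qᵀ (A + E) Q` exactly when `u` solves
the quadratic equation `(T₂₂ - λ) u = -δ - E₂₂ u + (ε + (v + r)ᵀ u) u`. As `T₂₂ - λ` is bounded
below by `σ`, this is a fixed-point problem, and the smallness of `‖E‖` makes the map a contraction
of the ball of radius `4 ‖δ‖ / σ` into itself. Mapping `(1, u)` back by `Q` and normalizing gives
the unit eigenvector `q̃₁`.
-/

noncomputable def opNorm {m n : ℕ} (A : Matrix (Fin m) (Fin n) ℝ) : ℝ :=
  ‖(Matrix.toEuclideanLin A).toContinuousLinearMap‖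

noncomputable def enorm {n : ℕ} (v : Fin n → ℝ) : ℝ := Real.sqrt (∑ i, v i ^ 2)

/-- smallest singular value of a square matrix -/
noncomputable def sigmaMin {k : ℕ} (M : Matrix (Fin k) (Fin k) ℝ) : ℝ :=
  sInf {t | ∃ w : Fin k → ℝ, _root_.enorm w = 1 ∧ t = _root_.enorm (M.mulVec w)}

open Matrix WithLp Set Function NNReal
open scoped Matrix.Norms.L2Operator RealInnerProductSpace

theorem enorm_eq_norm_toLp {n : ℕ} (v : Fin n → ℝ) : _root_.enorm v = ‖toLp 2 v‖ := by
  simp [_root_.enorm, EuclideanSpace.norm_eq]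

theorem enorm_ofLp {n : ℕ} (x : EuclideanSpace ℝ (Fin n)) : _root_.enorm (ofLp x) = ‖x‖ :=
  enorm_eq_norm_toLp _

theorem enorm_nonneg {n : ℕ} (v : Fin n → ℝ) : 0 ≤ _root_.enorm v := Real.sqrt_nonneg _

theorem abs_le_enorm {n : ℕ} (w : Fin n → ℝ) (i : Fin n) : |w i| ≤ _root_.enorm w := by
  simpa [enorm_eq_norm_toLp] using PiLp.norm_apply_le (toLp 2 w) i

theorem enorm_tail_le {n : ℕ} (w : Fin (n + 1) → ℝ) :
    _root_.enorm (Fin.tail w) ≤ _root_.enorm w := by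
  rw [_root_.enorm, _root_.enorm, Fin.sum_univ_succ]
  exact Real.sqrt_le_sqrt (le_add_of_nonneg_left (sq_nonneg _))

theorem enorm_cons {n : ℕ} (a : ℝ) (u : Fin n → ℝ) :
    _root_.enorm (Fin.cons a u : Fin (n + 1) → ℝ) = Real.sqrt (a ^ 2 + ∑ j, u j ^ 2) := by
  simp [_root_.enorm, Fin.sum_univ_succ]

theorem enorm_mulVec_of_orthogonal {n : ℕ} {Q : Matrix (Fin n) (Fin n) ℝ} (hQ : Qᵀ * Q = 1)
    (x : Fin n → ℝ) : _root_.enorm (Q *ᵥ x) = _root_.enorm x := by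
  have h : Q *ᵥ x ⬝ᵥ Q *ᵥ x = x ⬝ᵥ x := by
    rw [dotProduct_mulVec, ← mulVec_transpose, mulVec_mulVec, hQ, one_mulVec]
  simp only [_root_.enorm, sq]
  exact congrArg Real.sqrt h

theorem opNorm_eq_l2_opNorm {m n : ℕ} (A : Matrix (Fin m) (Fin n) ℝ) : opNorm A = ‖A‖ := rfl

theorem opNorm_nonneg {m n : ℕ} (A : Matrix (Fin m) (Fin n) ℝ) : 0 ≤ opNorm A := norm_nonneg _

theorem enorm_mulVec_le {m n : ℕ} (A : Matrix (Fin m) (Fin n) ℝ) (x : Fin n → ℝ) :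
    _root_.enorm (A *ᵥ x) ≤ opNorm A * _root_.enorm x := by
  rw [opNorm_eq_l2_opNorm]
  simpa [enorm_eq_norm_toLp] using l2_opNorm_mulVec A (toLp 2 x)

theorem opNorm_transpose {m n : ℕ} (A : Matrix (Fin m) (Fin n) ℝ) : opNorm Aᵀ = opNorm A := by
  rw [opNorm_eq_l2_opNorm, opNorm_eq_l2_opNorm, ← conjTranspose_eq_transpose_of_trivial,
    l2_opNorm_conjTranspose]

theorem opNorm_eq_one_of_orthogonal {n : ℕ} {Q : Matrix (Fin (n + 1)) (Fin (n + 1)) ℝ}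
    (hQ : Qᵀ * Q = 1) : opNorm Q = 1 := by
  have h := l2_opNorm_conjTranspose_mul_self Q
  rw [conjTranspose_eq_transpose_of_trivial, hQ, norm_one] at h
  rw [opNorm_eq_l2_opNorm]
  nlinarith [norm_nonneg Q]

theorem opNorm_transpose_mul_mul_le {n : ℕ} {Q : Matrix (Fin (n + 1)) (Fin (n + 1)) ℝ}
    (hQ : Qᵀ * Q = 1) (E : Matrix (Fin (n + 1)) (Fin (n + 1)) ℝ) :
    opNorm (Qᵀ * E * Q) ≤ opNorm E := by
  have hQt : ‖Qᵀ‖ = ‖Q‖ := by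
    rw [← conjTranspose_eq_transpose_of_trivial, l2_opNorm_conjTranspose]
  have hQ1 := opNorm_eq_one_of_orthogonal hQ
  rw [opNorm_eq_l2_opNorm] at hQ1 ⊢
  calc ‖Qᵀ * E * Q‖ ≤ ‖Qᵀ‖ * ‖E‖ * ‖Q‖ :=
        (l2_opNorm_mul _ _).trans (mul_le_mul_of_nonneg_right (l2_opNorm_mul _ _) (norm_nonneg _))
    _ = ‖E‖ := by rw [hQt, hQ1, one_mul, mul_one]
    _ = opNorm E := rfl

theorem enorm_col_le {m n : ℕ} (A : Matrix (Fin m) (Fin n) ℝ) (j : Fin n) :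
    _root_.enorm (A.col j) ≤ opNorm A := by
  have hj : _root_.enorm (Pi.single j 1 : Fin n → ℝ) = 1 := by
    simp [_root_.enorm, Pi.single_apply]
  simpa [hj] using enorm_mulVec_le A (Pi.single j 1)

theorem enorm_row_le {m n : ℕ} (A : Matrix (Fin m) (Fin n) ℝ) (i : Fin m) :
    _root_.enorm (A i) ≤ opNorm A :=
  (enorm_col_le Aᵀ i).trans_eq (opNorm_transpose A)

theorem enorm_submatrix_succ_mulVec_le {n : ℕ} (M : Matrix (Fin (n + 1)) (Fin (n + 1)) ℝ)
    (x : Fin n → ℝ) :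
    _root_.enorm (M.submatrix Fin.succ Fin.succ *ᵥ x) ≤ opNorm M * _root_.enorm x := by
  have hx : _root_.enorm (Fin.cons 0 x : Fin (n + 1) → ℝ) = _root_.enorm x := by
    rw [enorm_cons]
    simp [_root_.enorm]
  have htail : M.submatrix Fin.succ Fin.succ *ᵥ x = Fin.tail (M *ᵥ Fin.cons 0 x) := by
    ext i
    simp [mulVec, dotProduct, Fin.sum_univ_succ, Fin.tail]
  rw [htail, ← hx]
  exact (enorm_tail_le _).trans (enorm_mulVec_le _ _)

theorem sigmaMin_mul_enorm_le {k : ℕ} (M : Matrix (Fin k) (Fin k) ℝ) (w : Fin k → ℝ) :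
    sigmaMin M * _root_.enorm w ≤ _root_.enorm (M *ᵥ w) := by
  rw [enorm_eq_norm_toLp, enorm_eq_norm_toLp]
  rcases eq_or_ne w 0 with rfl | hw
  · simp
  have hpos : 0 < ‖toLp 2 w‖ := norm_pos_iff.mpr (by simpa using hw)
  have hmem : ‖toLp 2 w‖⁻¹ * ‖toLp 2 (M *ᵥ w)‖ ∈
      {t | ∃ w : Fin k → ℝ, _root_.enorm w = 1 ∧ t = _root_.enorm (M *ᵥ w)} := by
    refine ⟨‖toLp 2 w‖⁻¹ • w, ?_, ?_⟩
    · rw [enorm_eq_norm_toLp, toLp_smul, norm_smul, norm_inv, norm_norm, inv_mul_cancel₀ hpos.ne']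
    · rw [enorm_eq_norm_toLp, mulVec_smul, toLp_smul, norm_smul, norm_inv, norm_norm]
  have hbdd : BddBelow {t | ∃ w : Fin k → ℝ, _root_.enorm w = 1 ∧ t = _root_.enorm (M *ᵥ w)} :=
    ⟨0, by rintro t ⟨w, -, rfl⟩; exact Real.sqrt_nonneg _⟩
  rw [← le_div_iff₀ hpos, div_eq_inv_mul]
  exact csInf_le hbdd hmem

theorem exists_isFixedPt_of_lipschitzOnWith {α : Type*} [MetricSpace α] [CompleteSpace α]
    {f : α → α} {s : Set α} {K : ℝ≥0} (hK : K < 1) (hs : IsClosed s) (hne : s.Nonempty)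
    (hmaps : MapsTo f s s) (hf : LipschitzOnWith K f s) : ∃ x ∈ s, IsFixedPt f x := by
  obtain ⟨x, hx⟩ := hne
  obtain ⟨y, hys, hy, -⟩ := ContractingWith.exists_fixedPoint' hs.isComplete hmaps
    ⟨hK, hmaps.lipschitzOnWith_iff_restrict.mp hf⟩ hx (edist_ne_top _ _)
  exact ⟨y, hys, hy⟩

theorem mul_riccati_radius_le {a b σ : ℝ} (hσ : 0 < σ) (h : 25 * (a * b) ≤ σ ^ 2) :
    a * (4 * b / σ) ≤ 4 / 25 * σ := by
  rw [← mul_le_mul_iff_left₀ hσ]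
  calc a * (4 * b / σ) * σ = 4 * (a * b) := by field_simp
    _ ≤ 4 / 25 * σ * σ := by nlinarith

section Riccati

variable {F : Type*} [NormedAddCommGroup F] [InnerProductSpace ℝ F]

def riccatiMap (K : F →ₗ[ℝ] F) (ε : ℝ) (g δ u : F) : F := -δ - K u + (ε + ⟪g, u⟫) • u

variable {K : F →ₗ[ℝ] F} {η ε : ℝ} {g δ : F}

theorem norm_riccatiMap_le (hK : ∀ x, ‖K x‖ ≤ η * ‖x‖) (hε : |ε| ≤ η) (u : F) :
    ‖riccatiMap K ε g δ u‖ ≤ ‖δ‖ + 2 * η * ‖u‖ + ‖g‖ * ‖u‖ ^ 2 := by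
  have hcoef : |ε + ⟪g, u⟫| ≤ η + ‖g‖ * ‖u‖ :=
    (abs_add_le _ _).trans (add_le_add hε (abs_real_inner_le_norm g u))
  calc ‖riccatiMap K ε g δ u‖ ≤ ‖δ‖ + ‖K u‖ + |ε + ⟪g, u⟫| * ‖u‖ := by
        unfold riccatiMap
        refine (norm_add_le _ _).trans (add_le_add ((norm_sub_le _ _).trans ?_) ?_)
        · rw [norm_neg]
        · rw [norm_smul, Real.norm_eq_abs]
    _ ≤ ‖δ‖ + η * ‖u‖ + (η + ‖g‖ * ‖u‖) * ‖u‖ := by gcongr; exact hK u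
    _ = ‖δ‖ + 2 * η * ‖u‖ + ‖g‖ * ‖u‖ ^ 2 := by ring

theorem norm_riccatiMap_sub_le (hK : ∀ x, ‖K x‖ ≤ η * ‖x‖) (hε : |ε| ≤ η) (u u' : F) :
    ‖riccatiMap K ε g δ u - riccatiMap K ε g δ u'‖ ≤
      (2 * η + ‖g‖ * (‖u‖ + ‖u'‖)) * ‖u - u'‖ := by
  have hsplit : riccatiMap K ε g δ u - riccatiMap K ε g δ u' =
      -K (u - u') + (ε + ⟪g, u⟫) • (u - u') + ⟪g, u - u'⟫ • u' := by
    simp only [riccatiMap, map_sub, inner_sub_right, smul_sub, sub_smul, add_smul]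
    abel
  have hcoef : |ε + ⟪g, u⟫| ≤ η + ‖g‖ * ‖u‖ :=
    (abs_add_le _ _).trans (add_le_add hε (abs_real_inner_le_norm g u))
  rw [hsplit]
  calc _ ≤ ‖K (u - u')‖ + |ε + ⟪g, u⟫| * ‖u - u'‖ + |⟪g, u - u'⟫| * ‖u'‖ := by
        refine (norm_add_le _ _).trans (add_le_add ((norm_add_le _ _).trans ?_) ?_)
        · rw [norm_neg, norm_smul, Real.norm_eq_abs]
        · rw [norm_smul, Real.norm_eq_abs]
    _ ≤ η * ‖u - u'‖ + (η + ‖g‖ * ‖u‖) * ‖u - u'‖ + ‖g‖ * ‖u - u'‖ * ‖u'‖ := by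
        gcongr
        exacts [hK _, abs_real_inner_le_norm _ _]
    _ = (2 * η + ‖g‖ * (‖u‖ + ‖u'‖)) * ‖u - u'‖ := by ring

theorem norm_riccatiMap_le_of_norm_le {σ : ℝ} (hK : ∀ x, ‖K x‖ ≤ η * ‖x‖) (hε : |ε| ≤ η)
    (hσ : 0 < σ) (hη : 5 * η ≤ σ) (hgδ : 25 * (‖g‖ * ‖δ‖) ≤ σ ^ 2) {u : F}
    (hu : ‖u‖ ≤ 4 * ‖δ‖ / σ) : ‖riccatiMap K ε g δ u‖ ≤ σ * (4 * ‖δ‖ / σ) := by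
  set ρ := 4 * ‖δ‖ / σ
  have hρ0 : 0 ≤ ρ := by positivity
  have hη0 : 0 ≤ η := (abs_nonneg ε).trans hε
  have hδρ : ‖δ‖ = σ * ρ / 4 := by simp only [ρ]; field_simp
  have hgρ := mul_riccati_radius_le hσ hgδ
  calc _ ≤ ‖δ‖ + 2 * η * ‖u‖ + ‖g‖ * ‖u‖ ^ 2 := norm_riccatiMap_le hK hε u
    _ ≤ ‖δ‖ + 2 * η * ρ + ‖g‖ * ρ ^ 2 := by gcongr
    -- the three terms are at most `σρ/4`, `2σρ/5` and `4σρ/25`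
    _ ≤ σ * ρ := by
      nlinarith [mul_le_mul_of_nonneg_right hgρ hρ0, mul_le_mul_of_nonneg_right hη hρ0]

theorem norm_riccatiMap_sub_le_of_norm_le {σ : ℝ} (hK : ∀ x, ‖K x‖ ≤ η * ‖x‖) (hε : |ε| ≤ η)
    (hσ : 0 < σ) (hη : 5 * η ≤ σ) (hgδ : 25 * (‖g‖ * ‖δ‖) ≤ σ ^ 2) {u u' : F}
    (hu : ‖u‖ ≤ 4 * ‖δ‖ / σ) (hu' : ‖u'‖ ≤ 4 * ‖δ‖ / σ) :
    ‖riccatiMap K ε g δ u - riccatiMap K ε g δ u'‖ ≤ σ * (3 / 4 * ‖u - u'‖) := by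
  have hgρ := mul_riccati_radius_le hσ hgδ
  calc _ ≤ (2 * η + ‖g‖ * (‖u‖ + ‖u'‖)) * ‖u - u'‖ := norm_riccatiMap_sub_le hK hε u u'
    _ ≤ (2 * η + ‖g‖ * (4 * ‖δ‖ / σ + 4 * ‖δ‖ / σ)) * ‖u - u'‖ := by gcongr
    -- `2η ≤ 2σ/5` and `‖g‖ (8‖δ‖/σ) ≤ 8σ/25`, with `2/5 + 8/25 < 3/4`
    _ ≤ σ * (3 / 4 * ‖u - u'‖) := by nlinarith [norm_nonneg (u - u')]

theorem surjective_of_mul_norm_le [FiniteDimensional ℝ F] {T : F →ₗ[ℝ] F} {σ : ℝ} (hσ : 0 < σ)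
    (hT : ∀ x, σ * ‖x‖ ≤ ‖T x‖) : Surjective T := by
  refine LinearMap.injective_iff_surjective.mp <|
    (injective_iff_map_eq_zero T).mpr fun x hx => norm_le_zero_iff.mp ?_
  nlinarith [hT x, norm_nonneg x, show ‖T x‖ = 0 by simp [hx]]

theorem exists_eq_riccatiMap [FiniteDimensional ℝ F] {T : F →ₗ[ℝ] F} {σ : ℝ} (hσ : 0 < σ)
    (hT : ∀ x, σ * ‖x‖ ≤ ‖T x‖) (hK : ∀ x, ‖K x‖ ≤ η * ‖x‖) (hε : |ε| ≤ η)
    (hη : 5 * η ≤ σ) (hgδ : 25 * (‖g‖ * ‖δ‖) ≤ σ ^ 2) :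
    ∃ u, ‖u‖ ≤ 4 * ‖δ‖ / σ ∧ T u = riccatiMap K ε g δ u := by
  have : CompleteSpace F := FiniteDimensional.complete ℝ F
  have hTsurj := surjective_of_mul_norm_le hσ hT
  set N := surjInv hTsurj
  set f := N ∘ riccatiMap K ε g δ
  set B := Metric.closedBall (0 : F) (4 * ‖δ‖ / σ)
  have hN : ∀ y y', σ * ‖N y - N y'‖ ≤ ‖y - y'‖ := fun y y' => by
    simpa [N, surjInv_eq hTsurj] using hT (N y - N y')
  have hmaps : MapsTo f B B := by
    intro u hu
    rw [mem_closedBall_zero_iff] at hu ⊢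
    have hNu : σ * ‖f u‖ ≤ ‖riccatiMap K ε g δ u‖ := by
      simpa [f, N, surjInv_eq hTsurj] using hT (f u)
    exact le_of_mul_le_mul_left
      (hNu.trans (norm_riccatiMap_le_of_norm_le hK hε hσ hη hgδ hu)) hσ
  have hlip : LipschitzOnWith (3 / 4) f B := by
    refine LipschitzOnWith.of_dist_le_mul fun u hu u' hu' => ?_
    rw [mem_closedBall_zero_iff] at hu hu'
    rw [dist_eq_norm, dist_eq_norm, NNReal.coe_div, NNReal.coe_ofNat, NNReal.coe_ofNat]
    exact le_of_mul_le_mul_left ((hN _ _).trans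
      (norm_riccatiMap_sub_le_of_norm_le hK hε hσ hη hgδ hu hu')) hσ
  obtain ⟨u, hu, hfix⟩ := exists_isFixedPt_of_lipschitzOnWith (by norm_num)
    Metric.isClosed_closedBall ⟨0, Metric.mem_closedBall_self (by positivity)⟩ hmaps hlip
  exact ⟨u, mem_closedBall_zero_iff.mp hu, (congrArg T hfix.eq.symm).trans (surjInv_eq hTsurj _)⟩

end Riccati

theorem mulVec_cons_one_eq_smul {R : Type*} [CommRing R] {n : ℕ}
    (M : Matrix (Fin (n + 1)) (Fin (n + 1)) R) (u : Fin n → R)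
    (h : ∀ i, M i.succ 0 + (M.submatrix Fin.succ Fin.succ *ᵥ u) i =
      (M 0 0 + Fin.tail (M 0) ⬝ᵥ u) * u i) :
    M *ᵥ Fin.cons 1 u = (M 0 0 + Fin.tail (M 0) ⬝ᵥ u) • (Fin.cons 1 u : Fin (n + 1) → R) := by
  ext i
  refine Fin.cases ?_ (fun i => ?_) i
  · simp [mulVec, dotProduct, Fin.sum_univ_succ, Fin.tail]
  · simpa [mulVec, dotProduct, Fin.sum_univ_succ] using h i

theorem add_mulVec_cons_one_eq_smul {R : Type*} [CommRing R] {n : ℕ}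
    {MA ME : Matrix (Fin (n + 1)) (Fin (n + 1)) R} (hcol : ∀ i : Fin n, MA i.succ 0 = 0)
    {u : Fin n → R}
    (h : (MA.submatrix Fin.succ Fin.succ - MA 0 0 • 1) *ᵥ u =
      -Fin.tail (ME.col 0) - ME.submatrix Fin.succ Fin.succ *ᵥ u +
        (ME 0 0 + (Fin.tail (MA 0) + Fin.tail (ME 0)) ⬝ᵥ u) • u) :
    (MA + ME) *ᵥ Fin.cons 1 u = (MA 0 0 + ME 0 0 + (Fin.tail (MA 0) + Fin.tail (ME 0)) ⬝ᵥ u) •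
      (Fin.cons 1 u : Fin (n + 1) → R) := by
  refine mulVec_cons_one_eq_smul _ _ fun i => ?_
  have hi := congrFun h i
  simp only [sub_mulVec, smul_mulVec, one_mulVec, Pi.sub_apply, Pi.add_apply, Pi.neg_apply,
    Pi.smul_apply, smul_eq_mul] at hi
  have hsub : (MA + ME).submatrix Fin.succ Fin.succ =
      MA.submatrix Fin.succ Fin.succ + ME.submatrix Fin.succ Fin.succ := rfl
  have hrow : Fin.tail ((MA + ME) 0) = Fin.tail (MA 0) + Fin.tail (ME 0) := rfl
  rw [hsub, hrow, add_mulVec]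
  simp only [Matrix.add_apply, Pi.add_apply, hcol, zero_add]
  change _ = -ME i.succ 0 - _ + _ at hi
  linear_combination hi

theorem exists_mulVec_cons_one_eq_smul {m : ℕ} (MA ME : Matrix (Fin (m + 1)) (Fin (m + 1)) ℝ)
    (hcol : ∀ i : Fin m, MA i.succ 0 = 0) {σ : ℝ} (hσ : 0 < σ)
    (hT : ∀ w, σ * _root_.enorm w ≤
      _root_.enorm ((MA.submatrix Fin.succ Fin.succ - MA 0 0 • 1) *ᵥ w))
    {η : ℝ} (hME : opNorm ME ≤ η) (hη : 5 * η ≤ σ)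
    (hv : 25 * ((_root_.enorm (Fin.tail (MA 0)) + η) * η) ≤ σ ^ 2) :
    ∃ u, _root_.enorm u ≤ 4 * _root_.enorm (Fin.tail (ME.col 0)) / σ ∧
      ∃ μ : ℝ, (MA + ME) *ᵥ Fin.cons 1 u = μ • (Fin.cons 1 u : Fin (m + 1) → ℝ) := by
  set T := toLpLin 2 2 (MA.submatrix Fin.succ Fin.succ - MA 0 0 • 1)
  set K := toLpLin 2 2 (ME.submatrix Fin.succ Fin.succ)
  set g : EuclideanSpace ℝ (Fin m) := toLp 2 (Fin.tail (MA 0)) + toLp 2 (Fin.tail (ME 0))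
  set δ : EuclideanSpace ℝ (Fin m) := toLp 2 (Fin.tail (ME.col 0))
  have hT' : ∀ x, σ * ‖x‖ ≤ ‖T x‖ := fun x => by
    have h := hT (ofLp x)
    rwa [enorm_ofLp, enorm_eq_norm_toLp, ← toLpLin_apply] at h
  have hK : ∀ x, ‖K x‖ ≤ η * ‖x‖ := fun x => by
    have h := (enorm_submatrix_succ_mulVec_le ME (ofLp x)).trans
      (mul_le_mul_of_nonneg_right hME (enorm_nonneg _))
    rwa [enorm_ofLp, enorm_eq_norm_toLp, ← toLpLin_apply] at h
  have hε : |ME 0 0| ≤ η := (abs_le_enorm (ME.col 0) 0).trans ((enorm_col_le ME 0).trans hME)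
  have hδ : ‖δ‖ ≤ η := by
    rw [← enorm_eq_norm_toLp]
    exact (enorm_tail_le _).trans ((enorm_col_le ME 0).trans hME)
  have hg : ‖g‖ ≤ _root_.enorm (Fin.tail (MA 0)) + η := by
    refine (norm_add_le _ _).trans ?_
    rw [← enorm_eq_norm_toLp, ← enorm_eq_norm_toLp]
    gcongr
    exact (enorm_tail_le _).trans ((enorm_row_le ME 0).trans hME)
  have hgδ : 25 * (‖g‖ * ‖δ‖) ≤ σ ^ 2 :=
    (mul_le_mul_of_nonneg_left (mul_le_mul hg hδ (norm_nonneg _) ((norm_nonneg _).trans hg))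
      (by norm_num)).trans hv
  obtain ⟨u, hu, hRic⟩ := exists_eq_riccatiMap hσ hT' hK hε hη hgδ
  refine ⟨ofLp u, by rwa [enorm_ofLp, enorm_eq_norm_toLp], _, add_mulVec_cons_one_eq_smul hcol ?_⟩
  have hgu : ⟪g, u⟫ = Fin.tail (MA 0) ⬝ᵥ ofLp u + Fin.tail (ME 0) ⬝ᵥ ofLp u := by
    simp [g, inner_add_left, PiLp.inner_apply, dotProduct, mul_comm]
  simpa [T, K, δ, riccatiMap, hgu, sub_mulVec, smul_mulVec] using congrArg ofLp hRic

theorem mulVec_eq_smul_of_conj {n : ℕ} {M Q : Matrix (Fin n) (Fin n) ℝ} (hQ : Qᵀ * Q = 1)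
    {x : Fin n → ℝ} {μ : ℝ} (h : (Qᵀ * M * Q) *ᵥ x = μ • x) : M *ᵥ (Q *ᵥ x) = μ • (Q *ᵥ x) := by
  have hMQ : Q * (Qᵀ * M * Q) = M * Q := by
    rw [← Matrix.mul_assoc, ← Matrix.mul_assoc, mul_eq_one_comm.mp hQ, Matrix.one_mul]
  rw [mulVec_mulVec, ← hMQ, ← mulVec_mulVec, h, mulVec_smul]

theorem unit_eigenvector_of_conj {m : ℕ} {M Q : Matrix (Fin (m + 1)) (Fin (m + 1)) ℝ}
    (hQ : Qᵀ * Q = 1) {u : Fin m → ℝ} {μ : ℝ}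
    (h : (Qᵀ * M * Q) *ᵥ Fin.cons 1 u = μ • (Fin.cons 1 u : Fin (m + 1) → ℝ)) :
    let q : Fin (m + 1) → ℝ := fun i =>
      (Q i 0 + (of fun i (j : Fin m) => Q i j.succ).mulVec u i) / Real.sqrt (1 + ∑ j, u j ^ 2)
    _root_.enorm q = 1 ∧ M *ᵥ q = μ • q := by
  intro q
  set x : Fin (m + 1) → ℝ := Fin.cons 1 u
  have hx : _root_.enorm x = Real.sqrt (1 + ∑ j, u j ^ 2) := by rw [enorm_cons, one_pow]
  have hx0 : 0 < _root_.enorm x := by rw [hx]; positivity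
  have hq : q = (_root_.enorm x)⁻¹ • Q *ᵥ x := by
    ext i
    simp [q, x, hx, mulVec, dotProduct, Fin.sum_univ_succ, div_eq_inv_mul]
  rw [hq]
  refine ⟨?_, ?_⟩
  · rw [enorm_eq_norm_toLp, toLp_smul, norm_smul, ← enorm_eq_norm_toLp,
      enorm_mulVec_of_orthogonal hQ, Real.norm_eq_abs, abs_inv, abs_of_pos hx0,
      inv_mul_cancel₀ hx0.ne']
  · rw [mulVec_smul, mulVec_eq_smul_of_conj hQ h, smul_comm]

theorem perturbation_bounds {σ η w : ℝ} (hσ : 0 < σ) (hη : 0 ≤ η) (hw : 0 ≤ w)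
    (h : η * (1 + 5 * w / σ) ≤ σ / 5) : 5 * η ≤ σ ∧ 25 * ((w + η) * η) ≤ σ ^ 2 := by
  have h' : 5 * η * σ + 25 * η * w ≤ σ ^ 2 := by
    have := mul_le_mul_of_nonneg_left h (by positivity : (0:ℝ) ≤ 5 * σ)
    field_simp at this
    nlinarith
  have h5 : 5 * η ≤ σ := by nlinarith [mul_nonneg hη hw]
  exact ⟨h5, by nlinarith [mul_le_mul_of_nonneg_left h5 hη]⟩

theorem stmt5 {m : ℕ} (A E Q : Matrix (Fin (m + 1)) (Fin (m + 1)) ℝ)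
    (hQ : Q.transpose * Q = 1)
    -- block entries of Qᵀ A Q
    (lam : ℝ) (v : Fin m → ℝ) (T22 : Matrix (Fin m) (Fin m) ℝ)
    (hlam : (Q.transpose * A * Q) 0 0 = lam)
    (hv : ∀ j : Fin m, (Q.transpose * A * Q) 0 j.succ = v j)
    (hzero : ∀ j : Fin m, (Q.transpose * A * Q) j.succ 0 = 0)
    (hT : ∀ i j : Fin m, (Q.transpose * A * Q) i.succ j.succ = T22 i j)
    -- block entries of Qᵀ E Q
    (δv : Fin m → ℝ)
    (hδ : ∀ j : Fin m, (Q.transpose * E * Q) j.succ 0 = δv j)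
    (σ : ℝ) (hσdef : σ = sigmaMin (T22 - lam • (1 : Matrix (Fin m) (Fin m) ℝ)))
    (hσpos : 0 < σ)
    (hE : opNorm E * (1 + 5 * _root_.enorm v / σ) ≤ σ / 5) :
    ∃ u : Fin m → ℝ, _root_.enorm u ≤ 4 * _root_.enorm δv / σ ∧
      (let q1 : Fin (m + 1) → ℝ := fun i => Q i 0
       let Q2 : Matrix (Fin (m + 1)) (Fin m) ℝ := Matrix.of fun i j => Q i j.succ
       let qt : Fin (m + 1) → ℝ :=
         fun i => (q1 i + Q2.mulVec u i) / Real.sqrt (1 + ∑ j, u j ^ 2)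
       _root_.enorm qt = 1 ∧ ∃ μ : ℝ, (A + E).mulVec qt = μ • qt) := by
  have hblock : (Qᵀ * A * Q).submatrix Fin.succ Fin.succ - (Qᵀ * A * Q) 0 0 • 1 =
      T22 - lam • 1 := by
    ext i j
    simp [hT, hlam]
  have hrow : Fin.tail ((Qᵀ * A * Q) 0) = v := funext hv
  have hcol : Fin.tail ((Qᵀ * E * Q).col 0) = δv := funext hδ
  have hσ : ∀ w, σ * _root_.enorm w ≤ _root_.enorm ((T22 - lam • 1) *ᵥ w) := fun w =>
    hσdef ▸ sigmaMin_mul_enorm_le _ w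
  obtain ⟨h5, h25⟩ := perturbation_bounds hσpos (opNorm_nonneg E) (enorm_nonneg v) hE
  obtain ⟨u, hu, μ, hμ⟩ := exists_mulVec_cons_one_eq_smul (Qᵀ * A * Q) (Qᵀ * E * Q) hzero hσpos
    (hblock ▸ hσ) (opNorm_transpose_mul_mul_le hQ E) h5 (hrow ▸ h25)
  rw [← Matrix.add_mul, ← Matrix.mul_add] at hμ
  exact ⟨u, hcol ▸ hu, (unit_eigenvector_of_conj hQ hμ).1, μ, (unit_eigenvector_of_conj hQ hμ).2⟩
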